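/- The basic labeled stack machine with the buggy Add rule that labels the sum L (Add*: pops n1@ℓ1 and n2@ℓ2 and pushes (n1+n2)@L) violates end-to-end noninterference: there exist two indistinguishable initial states, both executing to halted states, whose final memories are distinguishable. -/
import Mathlib


/-- The two-point label lattice: `L` (low/public) and `H` (high/secret). -/
inductive Lab where
  | L
  | H
deriving DecidableEq

/-- `L ⊑ H`; the flows-to ordering. -/
def Lab.flows : Lab → Lab → Prop
  | .H, .L => False
  | _, _ => True

/-- Join (least upper bound) of two labels. -/
def Lab.join : Lab → Lab → Lab
  | .L, .L => .L
  | _, _ => .H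

/-- A labeled integer `n@ℓ`. -/
structure LInt where
  val : Int
  lab : Lab
deriving DecidableEq

/-- Instructions of the basic labeled stack machine. -/
inductive Instr where
  | Push (v : LInt)
  | Pop
  | Load
  | Store
  | Add
  | Noop
  | Halt
deriving DecidableEq

/-- Lookup a list at an integer index. -/
def getI {α : Type} (xs : List α) (i : Int) : Option α :=
  if 0 ≤ i then xs[i.toNat]? else none

/-- Update a list at an integer index. -/
def setI {α : Type} (xs : List α) (i : Int) (a : α) : List α :=
  if 0 ≤ i then xs.set i.toNat a else xs

/-- A machine state: program counter, stack, data memory, instruction memory. -/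
structure St where
  pc : Int
  stk : List LInt
  mem : List LInt
  imem : List Instr

/-- The step relation of the basic machine with the buggy Add* rule labeling the sum L. -/
inductive Step : St → St → Prop where
  | noop {pc s m i} :
      getI i pc = some .Noop →
      Step ⟨pc, s, m, i⟩ ⟨pc + 1, s, m, i⟩
  | push {pc s m i v} :
      getI i pc = some (.Push v) →
      Step ⟨pc, s, m, i⟩ ⟨pc + 1, v :: s, m, i⟩
  | pop {pc v s m i} :
      getI i pc = some .Pop →
      Step ⟨pc, v :: s, m, i⟩ ⟨pc + 1, s, m, i⟩
  | load {pc p ℓp s m i n ℓn} :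
      getI i pc = some .Load →
      getI m p = some ⟨n, ℓn⟩ →
      Step ⟨pc, ⟨p, ℓp⟩ :: s, m, i⟩ ⟨pc + 1, ⟨n, ℓn.join ℓp⟩ :: s, m, i⟩
  | store {pc p ℓp n ℓn s m i n' ℓn'} :
      getI i pc = some .Store →
      getI m p = some ⟨n', ℓn'⟩ →
      ℓp.flows ℓn' →
      Step ⟨pc, ⟨p, ℓp⟩ :: ⟨n, ℓn⟩ :: s, m, i⟩
           ⟨pc + 1, s, setI m p ⟨n, ℓn.join ℓp⟩, i⟩
  | add {pc n1 ℓ1 n2 ℓ2 s m i} :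
      getI i pc = some .Add →
      Step ⟨pc, ⟨n1, ℓ1⟩ :: ⟨n2, ℓ2⟩ :: s, m, i⟩
           ⟨pc + 1, ⟨n1 + n2, Lab.L⟩ :: s, m, i⟩

/-- Indistinguishability of labeled integers: both labels `H`, or both labels
`L` with equal payloads. -/
def LInt.indist (a b : LInt) : Prop :=
  (a.lab = Lab.H ∧ b.lab = Lab.H) ∨ (a.val = b.val ∧ a.lab = Lab.L ∧ b.lab = Lab.L)

/-- Indistinguishability of instructions: equal, or both `Push` with
indistinguishable labeled-integer arguments. -/
def Instr.indist : Instr → Instr → Prop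
  | .Push a, .Push b => LInt.indist a b
  | i1, i2 => i1 = i2

/-- Pointwise lifting of a relation to lists: equal lengths and elementwise
relatedness. -/
def ListIndist {α : Type} (R : α → α → Prop) (xs ys : List α) : Prop :=
  xs.length = ys.length ∧
  ∀ j (h1 : j < xs.length) (h2 : j < ys.length),
    R (xs.get ⟨j, h1⟩) (ys.get ⟨j, h2⟩)

/-- Indistinguishability of states with respect to memories: the data memories
and instruction memories are pointwise indistinguishable. -/
def IndistMem (S1 S2 : St) : Prop :=
  ListIndist LInt.indist S1.mem S2.mem ∧ ListIndist Instr.indist S1.imem S2.imem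

/-- Initial states: `pc = 0`, empty stack, and memory containing only `0@L`. -/
def Initial (S : St) : Prop :=
  S.pc = 0 ∧ S.stk = [] ∧ ∀ v ∈ S.mem, v = (⟨0, Lab.L⟩ : LInt)

/-- A halted state: the current instruction is `Halt`. -/
def Halted (S : St) : Prop := getI S.imem S.pc = some .Halt

/-- Multi-step execution. -/
def Exec : St → St → Prop := Relation.ReflTransGen Step

/-- A stuck state: no step is possible. -/
def Stuck (S : St) : Prop := ∀ S', ¬ Step S S'


def prog (v : Int) : List Instr :=
  [.Push ⟨0, .L⟩, .Push ⟨v, .H⟩, .Add, .Push ⟨0, .L⟩, .Store, .Halt]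

theorem exec_prog (v : Int) :
    Exec ⟨0, [], [⟨0, .L⟩], prog v⟩ ⟨5, [], [⟨v, .L⟩], prog v⟩ := by
  refine Relation.ReflTransGen.head (Step.push (v := ⟨0, .L⟩) rfl) ?_
  refine Relation.ReflTransGen.head (Step.push (v := ⟨v, .H⟩) rfl) ?_
  refine Relation.ReflTransGen.head (Step.add rfl) ?_
  refine Relation.ReflTransGen.head (Step.push (v := ⟨0, .L⟩) rfl) ?_
  have h := Relation.ReflTransGen.head
    (Step.store (pc := 4) (p := 0) (ℓp := .L) (n := v + 0) (ℓn := .L) (s := [])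
      (m := [⟨0, .L⟩]) (i := prog v) (n' := 0) (ℓn' := .L) rfl rfl trivial)
    (Relation.ReflTransGen.refl)
  simpa [setI, Lab.join] using h

theorem stuck_halt (v : Int) (stk : List LInt) (m : List LInt) :
    Stuck ⟨5, stk, m, prog v⟩ := by
  intro S' h
  cases h <;> rename_i hg <;> simp [getI, prog] at hg

/-- The buggy machine violates end-to-end noninterference: there exist two
indistinguishable initial states that both execute to stuck halted states
whose final states are memory-distinguishable. -/
theorem eeni_violation :
    ∃ S1 S2 S1' S2' : St,
      Initial S1 ∧ Initial S2 ∧ IndistMem S1 S2 ∧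
      Exec S1 S1' ∧ Stuck S1' ∧ Halted S1' ∧
      Exec S2 S2' ∧ Stuck S2' ∧ Halted S2' ∧
      ¬ IndistMem S1' S2' := by
  refine ⟨⟨0, [], [⟨0, .L⟩], prog 0⟩, ⟨0, [], [⟨0, .L⟩], prog 1⟩,
    ⟨5, [], [⟨0, .L⟩], prog 0⟩, ⟨5, [], [⟨1, .L⟩], prog 1⟩,
    ⟨rfl, rfl, by simp⟩, ⟨rfl, rfl, by simp⟩, ?_,
    exec_prog 0, stuck_halt 0 _ _, rfl,
    exec_prog 1, stuck_halt 1 _ _, rfl, ?_⟩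
  · refine ⟨⟨rfl, ?_⟩, ⟨rfl, ?_⟩⟩
    · intro j h1 h2
      simp at h1
      subst h1
      exact Or.inr ⟨rfl, rfl, rfl⟩
    · intro j h1 h2
      simp [prog] at h1
      interval_cases j <;>
        first
          | exact Or.inl ⟨rfl, rfl⟩
          | exact Or.inr ⟨rfl, rfl, rfl⟩
          | rfl
  · rintro ⟨⟨hlen, hj⟩, -⟩
    have := hj 0 (by simp) (by simp)
    simp [LInt.indist] at this
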